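/- Let G1 be an r1-regular graph on n1 vertices and G2 any graph on n2 vertices. Set L1 = L(G1) + n2·I_{n1}, L2 = -1_{n2}^T ⊗ I_{n1}, L3 = (L(G2) + I_{n2}) ⊗ I_{n1}, and S = L3 - J_{n2×n2} ⊗ L1^{-1}. Then the block matrix [[L1^{-1} + L1^{-1} L2 S^# L2^T L1^{-1}, -L1^{-1} L2 S^#],[-S^# L2^T L1^{-1}, S^#]] is a symmetric {1}-inverse of the Laplacian of the corona G1∘G2. -/

import Mathlib

/-!
The Laplacian of the corona is the block matrix `M = [[L1, L2], [L2ᵀ, L3]]`, and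
`L2ᵀ L1⁻¹ L2 = J ⊗ L1⁻¹`, so `S` is the Schur complement of the invertible block `L1`.
Factoring `M = [[1, 0], [L2ᵀ L1⁻¹, 1]] · diag(L1, S) · [[1, L1⁻¹ L2], [0, 1]]`, the matrix `X`
is the product of the inverses of the outer factors, in reverse order, around
`diag(L1⁻¹, S^#)`; hence `M X M = M` as soon as `S S^# S = S`. `X` is symmetric because `S^#`
is: the transpose of a group inverse of the symmetric `S` is again one, and group inverses are
unique.
-/

open Matrix Kronecker

/-- The corona `G1 ∘ G2`: one copy of `G1` and `n1` copies of `G2`, with the `i`-th vertex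
of `G1` joined to every vertex in the `i`-th copy of `G2`. The copy of vertex `w` of `G2`
belonging to the `i`-th copy is encoded as `Sum.inr (w, i)`, so the second block of vertices
is ordered as `W_1, ..., W_{n2}` where `W_j` collects the `j`-th vertex of all copies. -/
def corona {V1 V2 : Type*} (G1 : SimpleGraph V1) (G2 : SimpleGraph V2) :
    SimpleGraph (V1 ⊕ V2 × V1) where
  Adj x y :=
    match x, y with
    | .inl i, .inl j => G1.Adj i j
    | .inl i, .inr (_, k) => i = k
    | .inr (_, k), .inl i => k = i
    | .inr (w, i), .inr (w', j) => i = j ∧ G2.Adj w w'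
  symm := ⟨by
    rintro (i | ⟨w, i⟩) (j | ⟨w', j⟩) h
    · exact h.symm
    · exact h.symm
    · exact h.symm
    · exact ⟨h.1.symm, h.2.symm⟩⟩
  loopless := ⟨by
    rintro (i | ⟨w, i⟩) h
    · exact G1.irrefl h
    · exact G2.irrefl h.2⟩

noncomputable instance {V1 V2 : Type*} (G1 : SimpleGraph V1) (G2 : SimpleGraph V2) :
    DecidableRel (corona G1 G2).Adj := Classical.decRel _

def IsGroupInverse {M : Type*} [Monoid M] (s t : M) : Prop :=
  s * t * s = s ∧ t * s * t = t ∧ s * t = t * s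

namespace IsGroupInverse

variable {M : Type*} [Monoid M] {s t u : M}

theorem mul_mul_self_left (h : IsGroupInverse s t) : t * t * s = t := by
  rw [mul_assoc, ← h.2.2, ← mul_assoc, h.2.1]

theorem mul_mul_self_right (h : IsGroupInverse s t) : s * t * t = t := by
  rw [h.2.2, h.2.1]

theorem unique (ht : IsGroupInverse s t) (hu : IsGroupInverse s u) : t = u := by
  have htu : t = t * u * s :=
    calc t = t * t * s := ht.mul_mul_self_left.symm
      _ = t * t * (s * u * s) := by rw [hu.1]
      _ = t * t * s * u * s := by simp only [mul_assoc]
      _ = t * u * s := by rw [ht.mul_mul_self_left]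
  have hut : u = s * t * u :=
    calc u = s * u * u := hu.mul_mul_self_right.symm
      _ = s * t * s * u * u := by rw [ht.1]
      _ = s * t * (s * u * u) := by simp only [mul_assoc]
      _ = s * t * u := by rw [hu.mul_mul_self_right]
  calc t = t * u * s := htu
    _ = t * (s * u) := by rw [mul_assoc, hu.2.2]
    _ = s * t * u := by rw [← mul_assoc, ht.2.2]
    _ = u := hut.symm

end IsGroupInverse

theorem IsGroupInverse.transpose {n R : Type*} [Fintype n] [DecidableEq n] [CommSemiring R]
    {S T : Matrix n n R} (h : IsGroupInverse S T) : IsGroupInverse Sᵀ Tᵀ := by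
  obtain ⟨h1, h2, h3⟩ := h
  refine ⟨?_, ?_, ?_⟩
  · rw [← transpose_mul, ← transpose_mul, ← mul_assoc, h1]
  · rw [← transpose_mul, ← transpose_mul, ← mul_assoc, h2]
  · rw [← transpose_mul, ← transpose_mul, h3]

theorem Matrix.IsSymm.isSymm_of_isGroupInverse {n R : Type*} [Fintype n] [DecidableEq n]
    [CommSemiring R] {S T : Matrix n n R} (hS : S.IsSymm) (h : IsGroupInverse S T) :
    T.IsSymm := by
  have hT := h.transpose
  rw [hS.eq] at hT
  exact (h.unique hT).symm

namespace Matrix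

theorem IsSymm.transpose_mul_mul {m n R : Type*} [Fintype m] [CommSemiring R] {K : Matrix m m R}
    (hK : K.IsSymm) (B : Matrix m n R) : (Bᵀ * K * B).IsSymm := by
  rw [IsSymm, transpose_mul, transpose_mul, transpose_transpose, hK.eq, Matrix.mul_assoc]

theorem ones_kronecker_eq_transpose_mul_mul {m n R : Type*} [Fintype m] [DecidableEq m]
    [CommRing R] (K : Matrix m m R) :
    (of fun _ _ => 1 : Matrix n n R) ⊗ₖ K =
      (of fun i p => -(1 : Matrix m m R) i p.2 : Matrix m (n × m) R)ᵀ * K *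
        of fun i p => -(1 : Matrix m m R) i p.2 := by
  ext ⟨w, i⟩ ⟨w', j⟩
  simp [mul_apply, one_apply]

variable {m n R : Type*} [Fintype m] [DecidableEq m] [Fintype n] [CommRing R]

noncomputable def schurInverse (A : Matrix m m R) (B : Matrix m n R) (C : Matrix n m R)
    (T : Matrix n n R) : Matrix (m ⊕ n) (m ⊕ n) R :=
  fromBlocks (A⁻¹ + A⁻¹ * B * T * C * A⁻¹) (-(A⁻¹ * B * T)) (-(T * C * A⁻¹)) T

theorem fromBlocks_mul_schurInverse_mul {A : Matrix m m R} (B : Matrix m n R) (C : Matrix n m R)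
    (D : Matrix n n R) {T : Matrix n n R} (hA : IsUnit A.det)
    (hT : (D - C * A⁻¹ * B) * T * (D - C * A⁻¹ * B) = D - C * A⁻¹ * B) :
    fromBlocks A B C D * schurInverse A B C T * fromBlocks A B C D = fromBlocks A B C D := by
  set S := D - C * A⁻¹ * B with hS
  have hAA : A * A⁻¹ = 1 := mul_nonsing_inv A hA
  have hAA' : A⁻¹ * A = 1 := nonsing_inv_mul A hA
  have hD : D = S + C * A⁻¹ * B := by rw [hS]; abel
  have hMX : fromBlocks A B C D * schurInverse A B C T =
      fromBlocks 1 0 (C * A⁻¹ - S * T * C * A⁻¹) (S * T) := by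
    rw [schurInverse, fromBlocks_multiply, hD]
    congr 1 <;>
      simp only [Matrix.mul_add, Matrix.add_mul, Matrix.mul_neg, ← Matrix.mul_assoc, hAA,
        Matrix.one_mul] <;>
      abel
  rw [hMX, fromBlocks_multiply]
  congr 1
  · simp
  · simp
  · simp only [Matrix.sub_mul, Matrix.mul_assoc, hAA', Matrix.mul_one]
    abel
  · rw [hD, Matrix.mul_add, hT]
    simp only [Matrix.sub_mul, Matrix.mul_assoc]
    abel

theorem isSymm_schurInverse {A : Matrix m m R} (B : Matrix m n R) {T : Matrix n n R}
    (hA : A.IsSymm) (hT : T.IsSymm) : (schurInverse A B Bᵀ T).IsSymm := by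
  refine IsSymm.fromBlocks ?_ ?_ hT
  · simp only [IsSymm, transpose_add, transpose_mul, transpose_transpose, hA.inv.eq, hT.eq,
      Matrix.mul_assoc]
  · simp only [transpose_neg, transpose_mul, hA.inv.eq, hT.eq, Matrix.mul_assoc]

end Matrix

section Corona

variable {V1 V2 : Type*} {G1 : SimpleGraph V1} {G2 : SimpleGraph V2}

@[simp] theorem corona_adj_inl_inl {i j : V1} :
    (corona G1 G2).Adj (.inl i) (.inl j) ↔ G1.Adj i j := Iff.rfl

@[simp] theorem corona_adj_inl_inr {i : V1} {p : V2 × V1} :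
    (corona G1 G2).Adj (.inl i) (.inr p) ↔ i = p.2 := Iff.rfl

@[simp] theorem corona_adj_inr_inl {p : V2 × V1} {i : V1} :
    (corona G1 G2).Adj (.inr p) (.inl i) ↔ p.2 = i := Iff.rfl

@[simp] theorem corona_adj_inr_inr {p q : V2 × V1} :
    (corona G1 G2).Adj (.inr p) (.inr q) ↔ p.2 = q.2 ∧ G2.Adj p.1 q.1 := Iff.rfl

variable [Fintype V1] [Fintype V2] [DecidableEq V1]

theorem corona_degree_inl [DecidableRel G1.Adj] (i : V1) :
    (corona G1 G2).degree (.inl i) = G1.degree i + Fintype.card V2 := by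
  simp only [← SimpleGraph.card_neighborFinset_eq_degree, SimpleGraph.neighborFinset_eq_filter,
    Finset.card_filter, Fintype.sum_sum_type, Fintype.sum_prod_type, corona_adj_inl_inl,
    corona_adj_inl_inr]
  simp

theorem corona_degree_inr [DecidableRel G2.Adj] (w : V2) (i : V1) :
    (corona G1 G2).degree (.inr (w, i)) = G2.degree w + 1 := by
  simp only [← SimpleGraph.card_neighborFinset_eq_degree, SimpleGraph.neighborFinset_eq_filter,
    Finset.card_filter, Fintype.sum_sum_type, Fintype.sum_prod_type, corona_adj_inr_inl,
    corona_adj_inr_inr, ite_and]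
  simp [add_comm]

theorem lapMatrix_corona [DecidableEq V2] [DecidableRel G1.Adj] [DecidableRel G2.Adj]
    (R : Type*) [Ring R] :
    (corona G1 G2).lapMatrix R =
      fromBlocks (G1.lapMatrix R + (Fintype.card V2 : R) • 1)
        (of fun i p => -(1 : Matrix V1 V1 R) i p.2)
        (of fun i p => -(1 : Matrix V1 V1 R) i p.2)ᵀ ((G2.lapMatrix R + 1) ⊗ₖ 1) := by
  ext (i | ⟨w, i⟩) (j | ⟨w', j⟩)
    <;> simp [SimpleGraph.lapMatrix, SimpleGraph.degMatrix, diagonal_apply, one_apply, eq_comm,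
      corona_degree_inl, corona_degree_inr]
  · split_ifs <;> abel
  · obtain rfl | hw := eq_or_ne w w'
    · by_cases hij : i = j <;> simp [hij]
    · by_cases hij : i = j <;> simp [hij, hw]

end Corona

theorem corona_lap_symmetric_one_inverse_general {n1 n2 : ℕ}
    (G1 : SimpleGraph (Fin n1)) (G2 : SimpleGraph (Fin n2))
    [DecidableRel G1.Adj] [DecidableRel G2.Adj]
    (L1 : Matrix (Fin n1) (Fin n1) ℝ)
    (hL1 : L1 = G1.lapMatrix ℝ + (n2 : ℝ) • (1 : Matrix (Fin n1) (Fin n1) ℝ))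
    (hL1inv : IsUnit L1.det)
    (L2 : Matrix (Fin n1) (Fin n2 × Fin n1) ℝ)
    (hL2 : L2 = Matrix.of fun i p => -(1 : Matrix (Fin n1) (Fin n1) ℝ) i p.2)
    (L3 : Matrix (Fin n2 × Fin n1) (Fin n2 × Fin n1) ℝ)
    (hL3 : L3 = (G2.lapMatrix ℝ + 1) ⊗ₖ (1 : Matrix (Fin n1) (Fin n1) ℝ))
    (S Sh : Matrix (Fin n2 × Fin n1) (Fin n2 × Fin n1) ℝ)
    (hS : S = L3 - (Matrix.of fun _ _ => (1 : ℝ) : Matrix (Fin n2) (Fin n2) ℝ) ⊗ₖ L1⁻¹)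
    (hSh : S * Sh * S = S ∧ Sh * S * Sh = Sh ∧ S * Sh = Sh * S)
    (X : Matrix (Fin n1 ⊕ Fin n2 × Fin n1) (Fin n1 ⊕ Fin n2 × Fin n1) ℝ)
    (hX : X = Matrix.fromBlocks
      (L1⁻¹ + L1⁻¹ * L2 * Sh * L2ᵀ * L1⁻¹) (-(L1⁻¹ * L2 * Sh))
      (-(Sh * L2ᵀ * L1⁻¹)) Sh) :
    Xᵀ = X ∧
    (corona G1 G2).lapMatrix ℝ * X * (corona G1 G2).lapMatrix ℝ =
      (corona G1 G2).lapMatrix ℝ := by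
  have hLap : (corona G1 G2).lapMatrix ℝ = fromBlocks L1 L2 L2ᵀ L3 := by
    rw [lapMatrix_corona, Fintype.card_fin, hL1, hL2, hL3]
  obtain ⟨hL1symm, -, -, hL3symm⟩ :=
    isSymm_fromBlocks_iff.mp (hLap ▸ (corona G1 G2).isSymm_lapMatrix (R := ℝ))
  have hSchur : S = L3 - L2ᵀ * L1⁻¹ * L2 := by
    rw [hS, hL2, ones_kronecker_eq_transpose_mul_mul]
  have hShsymm : Sh.IsSymm :=
    (hSchur ▸ hL3symm.sub (hL1symm.inv.transpose_mul_mul L2)).isSymm_of_isGroupInverse hSh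
  subst hX
  refine ⟨isSymm_schurInverse L2 hL1symm hShsymm, ?_⟩
  rw [hLap]
  exact fromBlocks_mul_schurInverse_mul L2 L2ᵀ L3 hL1inv (hSchur ▸ hSh.1)

/-- The displayed block matrix built from `L1 = L(G1) + n2 I`, `L2 = -1ᵀ ⊗ I`,
`L3 = (L(G2) + I) ⊗ I`, `S = L3 - J ⊗ L1⁻¹` and the group inverse `Sh` of `S`
is a symmetric `{1}`-inverse of the Laplacian of the corona `G1 ∘ G2`. -/
theorem corona_lap_symmetric_one_inverse {n1 n2 r1 : ℕ}
    (G1 : SimpleGraph (Fin n1)) (G2 : SimpleGraph (Fin n2))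
    [DecidableRel G1.Adj] [DecidableRel G2.Adj]
    (hreg : G1.IsRegularOfDegree r1)
    (L1 : Matrix (Fin n1) (Fin n1) ℝ)
    (hL1 : L1 = G1.lapMatrix ℝ + (n2 : ℝ) • (1 : Matrix (Fin n1) (Fin n1) ℝ))
    (hL1inv : IsUnit L1.det)
    (L2 : Matrix (Fin n1) (Fin n2 × Fin n1) ℝ)
    (hL2 : L2 = Matrix.of fun i p => -(1 : Matrix (Fin n1) (Fin n1) ℝ) i p.2)
    (L3 : Matrix (Fin n2 × Fin n1) (Fin n2 × Fin n1) ℝ)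
    (hL3 : L3 = (G2.lapMatrix ℝ + 1) ⊗ₖ (1 : Matrix (Fin n1) (Fin n1) ℝ))
    (S Sh : Matrix (Fin n2 × Fin n1) (Fin n2 × Fin n1) ℝ)
    (hS : S = L3 - (Matrix.of fun _ _ => (1 : ℝ) : Matrix (Fin n2) (Fin n2) ℝ) ⊗ₖ L1⁻¹)
    (hSh : S * Sh * S = S ∧ Sh * S * Sh = Sh ∧ S * Sh = Sh * S)
    (X : Matrix (Fin n1 ⊕ Fin n2 × Fin n1) (Fin n1 ⊕ Fin n2 × Fin n1) ℝ)
    (hX : X = Matrix.fromBlocks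
      (L1⁻¹ + L1⁻¹ * L2 * Sh * L2ᵀ * L1⁻¹) (-(L1⁻¹ * L2 * Sh))
      (-(Sh * L2ᵀ * L1⁻¹)) Sh) :
    Xᵀ = X ∧
    (corona G1 G2).lapMatrix ℝ * X * (corona G1 G2).lapMatrix ℝ =
      (corona G1 G2).lapMatrix ℝ :=
  corona_lap_symmetric_one_inverse_general G1 G2 L1 hL1 hL1inv L2 hL2 L3 hL3 S Sh hS hSh X hX
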